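/- Under the setting of the second-derivative update map for two A-indices: let d, N ≥ 1, C_φ ∈ (0,4), C_{φ'}, C_{φ''} > 0, φ twice differentiable with |φ| ≤ C_φ, |φ'| ≤ C_{φ'}, |φ''| ≤ C_{φ''}, fix A ∈ ℝ^{N×d}, W ∈ ℝ^{N×N}, indices i,n ∈ {1,…,N}, j,m ∈ {1,…,d}, k ∈ {1,…,N}, and define F_{A^{nm},A^{ij},k}(x,s,s̃,s̃̃) = σ''(z)·((δ_{ik}/d)φ'(A^{ij})x^j + (1/N)∑_ℓ φ(W^{kℓ})s̃^{A^{ij},ℓ})·((δ_{nk}/d)φ'(A^{nm})x^m + (1/N)∑_ℓ φ(W^{kℓ})s̃^{A^{nm},ℓ}) + σ'(z)·((δ_{ik}δ_{(i,j)=(n,m)}/d)φ''(A^{ij})x^j + (1/N)∑_ℓ φ(W^{kℓ})s̃̃^{A^{nm},A^{ij},ℓ}), where z = (1/d)∑_ℓ φ(A^{kℓ})x^ℓ + (1/N)∑_ℓ φ(W^{kℓ})s^ℓ. Suppose both arguments (x,s,s̃,s̃̃) and (x',s',s̃',s̃̃') satisfy ‖x‖_max ≤ 1, s ∈ [0,1]^N,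 |s̃^{A^{··},ℓ}| ≤ C_{φ'}/((4−C_φ)d), and |s̃̃^{A^{nm},A^{ij},ℓ}| ≤ a_{AA,max}/(1−C_φ/4), where a_{AA,max} = C_{φ'}²M_φ²/(10d²) + C_{φ''}/(4d). Then |F_{A^{nm},A^{ij},k}(x,s,s̃,s̃̃) − F_{A^{nm},A^{ij},k}(x',s',s̃',s̃̃')| ≤ K_x‖x−x'‖_max + K_s‖s−s'‖_max + (C_φ M_φ C_{φ'}/(5d))‖s̃−s̃'‖_max + (C_φ/4)‖s̃̃−s̃̃'‖_max, where K_x = M_φ C_{φ'}²/(5d²) + C_φ C_{φ'}² M_φ²/(8d²) + C_{φ''}/(4d) + (C_φ/10)(C_{φ''}/d + (C_φ/(1−C_φ/4)) a_{AA,max}) and K_s = C_φ C_{φ'}² M_φ²/(8d²) + (C_φ/10)(C_{φ''}/d + (C_φ/(1−C_φ/4)) a_{AA,max}). -/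

import Mathlib

open Finset

noncomputable def sigmoid (y : ℝ) : ℝ := 1 / (1 + Real.exp (-y))

lemma sig_denom_pos (y : ℝ) : 0 < 1 + Real.exp (-y) := by positivity

lemma sigmoid_pos (y : ℝ) : 0 < sigmoid y := by
  unfold sigmoid; positivity

lemma sigmoid_lt_one (y : ℝ) : sigmoid y < 1 := by
  unfold sigmoid
  rw [div_lt_one (sig_denom_pos y)]
  nlinarith [Real.exp_pos (-y)]

lemma sigmoid_hasDerivAt (y : ℝ) :
    HasDerivAt sigmoid (sigmoid y * (1 - sigmoid y)) y := by
  have h1 : HasDerivAt (fun y : ℝ => 1 + Real.exp (-y)) (-Real.exp (-y)) y := by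
    simpa using (((Real.hasDerivAt_exp (-y)).comp y (hasDerivAt_neg y)).const_add 1)
  have h2 := h1.inv (ne_of_gt (sig_denom_pos y))
  have : sigmoid = fun y : ℝ => (1 + Real.exp (-y))⁻¹ := by
    funext t; simp [sigmoid, one_div]
  rw [this]
  refine h2.congr_deriv ?_
  have hne := ne_of_gt (sig_denom_pos y)
  field_simp [sigmoid]
  ring

lemma deriv_sigmoid_eq : deriv sigmoid = fun y => sigmoid y * (1 - sigmoid y) := by
  funext y; exact (sigmoid_hasDerivAt y).deriv

lemma deriv2_hasDerivAt (y : ℝ) :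
    HasDerivAt (deriv sigmoid)
      (sigmoid y * (1 - sigmoid y) * (1 - 2 * sigmoid y)) y := by
  rw [deriv_sigmoid_eq]
  have h := ((sigmoid_hasDerivAt y).mul
    ((sigmoid_hasDerivAt y).const_sub 1))
  refine h.congr_deriv ?_
  ring

lemma deriv2_sigmoid_eq : deriv (deriv sigmoid)
    = fun y => sigmoid y * (1 - sigmoid y) * (1 - 2 * sigmoid y) := by
  funext y; exact (deriv2_hasDerivAt y).deriv

lemma deriv3_hasDerivAt (y : ℝ) :
    HasDerivAt (deriv (deriv sigmoid))
      (sigmoid y * (1 - sigmoid y) * (1 - 6 * sigmoid y + 6 * sigmoid y ^ 2)) y := by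
  rw [deriv2_sigmoid_eq]
  have h := (((sigmoid_hasDerivAt y).mul
    ((sigmoid_hasDerivAt y).const_sub 1)).mul
    (((sigmoid_hasDerivAt y).const_mul 2).const_sub 1))
  refine h.congr_deriv ?_
  simp only [Pi.mul_apply]
  ring

lemma abs_deriv_sigmoid_le (y : ℝ) : |deriv sigmoid y| ≤ 1 / 4 := by
  rw [(sigmoid_hasDerivAt y).deriv]
  have h0 := sigmoid_pos y; have h1 := sigmoid_lt_one y
  rw [abs_le]; constructor <;> nlinarith [sq_nonneg (sigmoid y - 1/2), mul_pos h0 (by linarith : (0:ℝ) < 1 - sigmoid y)]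

lemma abs_deriv2_sigmoid_le (y : ℝ) : |deriv (deriv sigmoid) y| ≤ 1 / 10 := by
  rw [(deriv2_hasDerivAt y).deriv]
  have h0 := sigmoid_pos y; have h1 := sigmoid_lt_one y
  set t := sigmoid y
  have hu : 0 ≤ t * (1 - t) := by nlinarith
  have hu4 : t * (1 - t) ≤ 1 / 4 := by nlinarith [sq_nonneg (t - 1/2)]
  have hsq : (t * (1 - t) * (1 - 2 * t)) ^ 2 ≤ (1/10) ^ 2 := by
    have h14 : (1 - 2*t)^2 = 1 - 4 * (t * (1-t)) := by ring
    nlinarith [mul_nonneg (sq_nonneg (t*(1-t) - 1/6)) (by linarith : (0:ℝ) ≤ t*(1-t) + 1/12)]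
  have := abs_le_of_sq_le_sq' hsq (by norm_num)
  rw [abs_le]; exact this

lemma abs_deriv3_sigmoid_le (y : ℝ) :
    |sigmoid y * (1 - sigmoid y) * (1 - 6 * sigmoid y + 6 * sigmoid y ^ 2)| ≤ 1 / 8 := by
  have h0 := sigmoid_pos y; have h1 := sigmoid_lt_one y
  set t := sigmoid y
  have hu : 0 ≤ t * (1 - t) := by nlinarith
  have hu4 : t * (1 - t) ≤ 1 / 4 := by nlinarith [sq_nonneg (t - 1/2)]
  have h16 : 1 - 6*t + 6*t^2 = 1 - 6 * (t * (1-t)) := by ring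
  rw [abs_le]
  constructor
  · nlinarith [mul_nonneg (by linarith : (0:ℝ) ≤ 1/4 - t*(1-t)) (by linarith : (0:ℝ) ≤ t*(1-t) + 1/12)]
  · nlinarith [sq_nonneg (t*(1-t) - 1/12)]

lemma lipschitz_of_hasDerivAt (f f' : ℝ → ℝ) (C : ℝ)
    (hf : ∀ y, HasDerivAt f (f' y) y) (hb : ∀ y, |f' y| ≤ C) (a b : ℝ) :
    |f a - f b| ≤ C * |a - b| := by
  have := Convex.norm_image_sub_le_of_norm_hasDerivWithin_le
    (f := f) (f' := f') (C := C) (s := Set.univ)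
    (fun y _ => (hf y).hasDerivWithinAt)
    (fun y _ => by simpa using hb y)
    convex_univ (Set.mem_univ b) (Set.mem_univ a)
  simpa using this

lemma deriv_sigmoid_lip (a b : ℝ) :
    |deriv sigmoid a - deriv sigmoid b| ≤ (1/10) * |a - b| :=
  lipschitz_of_hasDerivAt _ _ _ deriv2_hasDerivAt
    (fun y => by rw [← (deriv2_hasDerivAt y).deriv]; exact abs_deriv2_sigmoid_le y) a b

lemma deriv2_sigmoid_lip (a b : ℝ) :
    |deriv (deriv sigmoid) a - deriv (deriv sigmoid) b| ≤ (1/8) * |a - b| :=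
  lipschitz_of_hasDerivAt _ _ _ deriv3_hasDerivAt abs_deriv3_sigmoid_le a b

lemma avg_abs_le (nn : ℕ) (hn : 0 < nn) (c a : Fin nn → ℝ) (C B : ℝ)
    (hC : 0 ≤ C) (hc : ∀ i, |c i| ≤ C) (ha : ∀ i, |a i| ≤ B) :
    |(1 / (nn : ℝ)) * ∑ i, c i * a i| ≤ C * B := by
  have hn' : (0:ℝ) < nn := by exact_mod_cast hn
  have hB : 0 ≤ B := le_trans (abs_nonneg _) (ha ⟨0, hn⟩)
  calc |(1 / (nn : ℝ)) * ∑ i, c i * a i|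
      = (1 / (nn : ℝ)) * |∑ i, c i * a i| := by
        rw [abs_mul, abs_of_nonneg (by positivity)]
    _ ≤ (1 / (nn : ℝ)) * ∑ i, |c i * a i| := by
        gcongr
        exact Finset.abs_sum_le_sum_abs _ _
    _ ≤ (1 / (nn : ℝ)) * ∑ _i : Fin nn, C * B := by
        gcongr (1 / (nn : ℝ)) * ?_ with i
        apply Finset.sum_le_sum
        intro i _
        rw [abs_mul]; exact mul_le_mul (hc i) (ha i) (abs_nonneg _) hC
    _ = C * B := by
        rw [Finset.sum_const, Finset.card_univ, Fintype.card_fin, nsmul_eq_mul]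
        field_simp

lemma avg_diff_le (nn : ℕ) (hn : 0 < nn) (c a b : Fin nn → ℝ) (C B : ℝ)
    (hC : 0 ≤ C) (hc : ∀ i, |c i| ≤ C) (hab : ∀ i, |a i - b i| ≤ B) :
    |(1 / (nn : ℝ)) * ∑ i, c i * a i - (1 / (nn : ℝ)) * ∑ i, c i * b i| ≤ C * B := by
  have he : (1 / (nn : ℝ)) * ∑ i, c i * a i - (1 / (nn : ℝ)) * ∑ i, c i * b i
      = (1 / (nn : ℝ)) * ∑ i, c i * (a i - b i) := by
    rw [← mul_sub, ← Finset.sum_sub_distrib]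
    congr 1
    apply Finset.sum_congr rfl
    intro i _
    ring
  rw [he]
  exact avg_abs_le nn hn c _ C B hC hc hab

lemma abstract_est (a a' b b' u u' v v' w w' Bu Bw Dz Du Dv Dw : ℝ)
    (ha : |a - a'| ≤ (1/8) * Dz) (ha' : |a'| ≤ 1/10)
    (hb : |b - b'| ≤ (1/10) * Dz) (hb' : |b'| ≤ 1/4)
    (hu : |u| ≤ Bu) (hu' : |u'| ≤ Bu) (hv : |v| ≤ Bu)
    (hDu : |u - u'| ≤ Du) (hDv : |v - v'| ≤ Dv)
    (hw : |w| ≤ Bw) (hDw : |w - w'| ≤ Dw)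
    (hDz : 0 ≤ Dz) :
    |a * u * v + b * w - (a' * u' * v' + b' * w')|
      ≤ (1/8) * Dz * (Bu * Bu) + (1/10) * (Du * Bu) + (1/10) * (Bu * Dv)
        + (1/10) * Dz * Bw + (1/4) * Dw := by
  have hBu : 0 ≤ Bu := le_trans (abs_nonneg _) hu
  have hBw : 0 ≤ Bw := le_trans (abs_nonneg _) hw
  have hDu0 : 0 ≤ Du := le_trans (abs_nonneg _) hDu
  have hDv0 : 0 ≤ Dv := le_trans (abs_nonneg _) hDv
  have he : a * u * v + b * w - (a' * u' * v' + b' * w')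
      = (a - a') * (u * v) + a' * ((u - u') * v) + a' * (u' * (v - v'))
        + (b - b') * w + b' * (w - w') := by ring
  rw [he]
  have t1 : |(a - a') * (u * v)| ≤ (1/8) * Dz * (Bu * Bu) := by
    rw [abs_mul, abs_mul]
    exact mul_le_mul ha (mul_le_mul hu hv (abs_nonneg _) hBu) (by positivity) (by positivity)
  have t2 : |a' * ((u - u') * v)| ≤ (1/10) * (Du * Bu) := by
    rw [abs_mul, abs_mul]
    exact mul_le_mul ha' (mul_le_mul hDu hv (abs_nonneg _) hDu0) (by positivity) (by norm_num)
  have t3 : |a' * (u' * (v - v'))| ≤ (1/10) * (Bu * Dv) := by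
    rw [abs_mul, abs_mul]
    exact mul_le_mul ha' (mul_le_mul hu' hDv (abs_nonneg _) hBu) (by positivity) (by norm_num)
  have t4 : |(b - b') * w| ≤ (1/10) * Dz * Bw := by
    rw [abs_mul]
    exact mul_le_mul hb hw (abs_nonneg _) (by positivity)
  have t5 : |b' * (w - w')| ≤ (1/4) * Dw := by
    rw [abs_mul]
    exact mul_le_mul hb' hDw (abs_nonneg _) (by norm_num)
  calc |(a - a') * (u * v) + a' * ((u - u') * v) + a' * (u' * (v - v'))
        + (b - b') * w + b' * (w - w')|
      ≤ |(a - a') * (u * v) + a' * ((u - u') * v) + a' * (u' * (v - v'))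
        + (b - b') * w| + |b' * (w - w')| := abs_add_le _ _
    _ ≤ |(a - a') * (u * v) + a' * ((u - u') * v) + a' * (u' * (v - v'))|
        + |(b - b') * w| + |b' * (w - w')| := by
          have := abs_add_le ((a - a') * (u * v) + a' * ((u - u') * v) + a' * (u' * (v - v'))) ((b - b') * w)
          linarith
    _ ≤ |(a - a') * (u * v)| + |a' * ((u - u') * v)| + |a' * (u' * (v - v'))|
        + |(b - b') * w| + |b' * (w - w')| := by
          have h1 := abs_add_le ((a - a') * (u * v) + a' * ((u - u') * v)) (a' * (u' * (v - v')))
          have h2 := abs_add_le ((a - a') * (u * v)) (a' * ((u - u') * v))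
          linarith
    _ ≤ _ := by linarith

lemma delta_term (δ c t C B dd : ℝ) (hδ : |δ| ≤ 1) (hdd : 0 < dd)
    (hC : 0 ≤ C) (hc : |c| ≤ C) (hB : 0 ≤ B) (ht : |t| ≤ B) :
    |δ / dd * c * t| ≤ C / dd * B := by
  rw [abs_mul, abs_mul, abs_div, abs_of_pos hdd]
  have h1 : |δ| / dd ≤ 1 / dd := by gcongr
  have h2 : |δ| / dd * |c| ≤ (1 / dd) * C :=
    mul_le_mul h1 hc (abs_nonneg _) (by positivity)
  have h3 : |δ| / dd * |c| * |t| ≤ (1 / dd) * C * B :=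
    mul_le_mul h2 ht (abs_nonneg _) (by positivity)
  calc |δ| / dd * |c| * |t| ≤ (1 / dd) * C * B := h3
    _ = C / dd * B := by ring

/-- The second-derivative forward update map for two `A`-indices. -/
noncomputable def FAA (d N : ℕ) (φ : ℝ → ℝ)
    (A : Fin N → Fin d → ℝ) (W : Fin N → Fin N → ℝ)
    (i n : Fin N) (j m : Fin d) (k : Fin N)
    (x : Fin d → ℝ) (s : Fin N → ℝ)
    (tA : Fin N → Fin d → Fin N → ℝ) (tt : Fin N → ℝ) : ℝ :=
  deriv (deriv sigmoid) ((1 / (d : ℝ)) * ∑ ℓ, φ (A k ℓ) * x ℓ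
      + (1 / (N : ℝ)) * ∑ ℓ, φ (W k ℓ) * s ℓ)
    * ((if i = k then (1 : ℝ) else 0) / (d : ℝ) * deriv φ (A i j) * x j
        + (1 / (N : ℝ)) * ∑ ℓ, φ (W k ℓ) * tA i j ℓ)
    * ((if n = k then (1 : ℝ) else 0) / (d : ℝ) * deriv φ (A n m) * x m
        + (1 / (N : ℝ)) * ∑ ℓ, φ (W k ℓ) * tA n m ℓ)
  + deriv sigmoid ((1 / (d : ℝ)) * ∑ ℓ, φ (A k ℓ) * x ℓ
      + (1 / (N : ℝ)) * ∑ ℓ, φ (W k ℓ) * s ℓ)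
    * ((if i = k then (1 : ℝ) else 0) * (if (i, j) = (n, m) then (1 : ℝ) else 0) / (d : ℝ)
          * deriv (deriv φ) (A i j) * x j
        + (1 / (N : ℝ)) * ∑ ℓ, φ (W k ℓ) * tt ℓ)


set_option maxHeartbeats 2000000 in
theorem FAA_lipschitz
    (d N : ℕ) (hd : 1 ≤ d) (hN : 1 ≤ N)
    (Cφ Cφ' Cφ'' : ℝ) (hCφ0 : 0 < Cφ) (hCφ4 : Cφ < 4) (hCφ' : 0 < Cφ') (hCφ'' : 0 < Cφ'')
    (φ : ℝ → ℝ) (hφdiff : Differentiable ℝ φ) (hφdiff2 : Differentiable ℝ (deriv φ))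
    (hφ : ∀ y, |φ y| ≤ Cφ) (hφ' : ∀ y, |deriv φ y| ≤ Cφ')
    (hφ'' : ∀ y, |deriv (deriv φ) y| ≤ Cφ'')
    (A : Fin N → Fin d → ℝ) (W : Fin N → Fin N → ℝ)
    (i n : Fin N) (j m : Fin d) (k : Fin N)
    (Mφ aAA Kx Ks : ℝ)
    (hMφ : Mφ = 1 + Cφ / (4 - Cφ))
    (haAA : aAA = Cφ' ^ 2 * Mφ ^ 2 / (10 * (d : ℝ) ^ 2) + Cφ'' / (4 * (d : ℝ)))
    (hKx : Kx = Mφ * Cφ' ^ 2 / (5 * (d : ℝ) ^ 2) + Cφ * Cφ' ^ 2 * Mφ ^ 2 / (8 * (d : ℝ) ^ 2)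
        + Cφ'' / (4 * (d : ℝ))
        + (Cφ / 10) * (Cφ'' / (d : ℝ) + (Cφ / (1 - Cφ / 4)) * aAA))
    (hKs : Ks = Cφ * Cφ' ^ 2 * Mφ ^ 2 / (8 * (d : ℝ) ^ 2)
        + (Cφ / 10) * (Cφ'' / (d : ℝ) + (Cφ / (1 - Cφ / 4)) * aAA))
    (x x' : Fin d → ℝ) (s s' : Fin N → ℝ)
    (tA tA' : Fin N → Fin d → Fin N → ℝ) (tt tt' : Fin N → ℝ)
    (hx : ‖x‖ ≤ 1) (hx' : ‖x'‖ ≤ 1)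
    (hs : ∀ ℓ, s ℓ ∈ Set.Icc (0 : ℝ) 1) (hs' : ∀ ℓ, s' ℓ ∈ Set.Icc (0 : ℝ) 1)
    (htA : ∀ a b ℓ, |tA a b ℓ| ≤ Cφ' / ((4 - Cφ) * d))
    (htA' : ∀ a b ℓ, |tA' a b ℓ| ≤ Cφ' / ((4 - Cφ) * d))
    (htt : ∀ ℓ, |tt ℓ| ≤ aAA / (1 - Cφ / 4))
    (htt' : ∀ ℓ, |tt' ℓ| ≤ aAA / (1 - Cφ / 4)) :
    |FAA d N φ A W i n j m k x s tA tt - FAA d N φ A W i n j m k x' s' tA' tt'|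
      ≤ Kx * ‖x - x'‖ + Ks * ‖s - s'‖
        + (Cφ * Mφ * Cφ' / (5 * (d : ℝ))) * ‖tA - tA'‖
        + (Cφ / 4) * ‖tt - tt'‖ := by
  have hd0 : (0:ℝ) < d := by exact_mod_cast hd
  have hN0 : (0:ℝ) < N := by exact_mod_cast hN
  have hdn : 0 < d := hd
  have hNn : 0 < N := hN
  have h4C : (0:ℝ) < 4 - Cφ := by linarith
  have h1C4 : (0:ℝ) < 1 - Cφ / 4 := by linarith
  have hMp : 0 < Mφ := by rw [hMφ]; positivity
  have haAAp : 0 < aAA := by rw [haAA]; positivity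
  have hCφ0' : 0 ≤ Cφ := le_of_lt hCφ0
  -- pointwise bounds
  have hxl : ∀ ℓ, |x ℓ| ≤ 1 := fun ℓ => le_trans (by simpa using norm_le_pi_norm x ℓ) hx
  have hxl' : ∀ ℓ, |x' ℓ| ≤ 1 := fun ℓ => le_trans (by simpa using norm_le_pi_norm x' ℓ) hx'
  have hxd : ∀ ℓ, |x ℓ - x' ℓ| ≤ ‖x - x'‖ := fun ℓ => by
    simpa using norm_le_pi_norm (x - x') ℓ
  have hsl : ∀ ℓ, |s ℓ| ≤ 1 := fun ℓ => abs_le.2 ⟨by linarith [(hs ℓ).1], (hs ℓ).2⟩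
  have hsd : ∀ ℓ, |s ℓ - s' ℓ| ≤ ‖s - s'‖ := fun ℓ => by
    simpa using norm_le_pi_norm (s - s') ℓ
  have htAd : ∀ a b ℓ, |tA a b ℓ - tA' a b ℓ| ≤ ‖tA - tA'‖ := by
    intro a b ℓ
    calc |tA a b ℓ - tA' a b ℓ| = ‖(tA - tA') a b ℓ‖ := by simp [Real.norm_eq_abs]
      _ ≤ ‖(tA - tA') a b‖ := norm_le_pi_norm _ ℓ
      _ ≤ ‖(tA - tA') a‖ := norm_le_pi_norm _ b
      _ ≤ ‖tA - tA'‖ := norm_le_pi_norm _ a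
  have httd : ∀ ℓ, |tt ℓ - tt' ℓ| ≤ ‖tt - tt'‖ := fun ℓ => by
    simpa using norm_le_pi_norm (tt - tt') ℓ
  have hX0 : 0 ≤ ‖x - x'‖ := norm_nonneg _
  have hS0 : 0 ≤ ‖s - s'‖ := norm_nonneg _
  have hT0 : 0 ≤ ‖tA - tA'‖ := norm_nonneg _
  have hU0 : 0 ≤ ‖tt - tt'‖ := norm_nonneg _
  -- indicator bounds
  have hδik : |(if i = k then (1:ℝ) else 0)| ≤ 1 := by split_ifs <;> simp
  have hδnk : |(if n = k then (1:ℝ) else 0)| ≤ 1 := by split_ifs <;> simp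
  have hδδ : |(if i = k then (1:ℝ) else 0) * (if (i, j) = (n, m) then (1:ℝ) else 0)| ≤ 1 := by
    rw [abs_mul]
    calc |(if i = k then (1:ℝ) else 0)| * |(if (i, j) = (n, m) then (1:ℝ) else 0)|
        ≤ 1 * 1 := by
          apply mul_le_mul hδik _ (abs_nonneg _) zero_le_one
          split_ifs <;> simp
      _ = 1 := by ring
  simp only [FAA]
  set z := (1 / (d : ℝ)) * ∑ ℓ, φ (A k ℓ) * x ℓ
      + (1 / (N : ℝ)) * ∑ ℓ, φ (W k ℓ) * s ℓ with hzdef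
  set z' := (1 / (d : ℝ)) * ∑ ℓ, φ (A k ℓ) * x' ℓ
      + (1 / (N : ℝ)) * ∑ ℓ, φ (W k ℓ) * s' ℓ with hz'def
  set u := (if i = k then (1 : ℝ) else 0) / (d : ℝ) * deriv φ (A i j) * x j
      + (1 / (N : ℝ)) * ∑ ℓ, φ (W k ℓ) * tA i j ℓ with hudef
  set u' := (if i = k then (1 : ℝ) else 0) / (d : ℝ) * deriv φ (A i j) * x' j
      + (1 / (N : ℝ)) * ∑ ℓ, φ (W k ℓ) * tA' i j ℓ with hu'def
  set v := (if n = k then (1 : ℝ) else 0) / (d : ℝ) * deriv φ (A n m) * x m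
      + (1 / (N : ℝ)) * ∑ ℓ, φ (W k ℓ) * tA n m ℓ with hvdef
  set v' := (if n = k then (1 : ℝ) else 0) / (d : ℝ) * deriv φ (A n m) * x' m
      + (1 / (N : ℝ)) * ∑ ℓ, φ (W k ℓ) * tA' n m ℓ with hv'def
  set w := (if i = k then (1 : ℝ) else 0) * (if (i, j) = (n, m) then (1 : ℝ) else 0) / (d : ℝ)
      * deriv (deriv φ) (A i j) * x j
      + (1 / (N : ℝ)) * ∑ ℓ, φ (W k ℓ) * tt ℓ with hwdef
  set w' := (if i = k then (1 : ℝ) else 0) * (if (i, j) = (n, m) then (1 : ℝ) else 0) / (d : ℝ)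
      * deriv (deriv φ) (A i j) * x' j
      + (1 / (N : ℝ)) * ∑ ℓ, φ (W k ℓ) * tt' ℓ with hw'def
  -- component bounds
  have hzd : |z - z'| ≤ Cφ * ‖x - x'‖ + Cφ * ‖s - s'‖ := by
    rw [hzdef, hz'def]
    have e : (1 / (d : ℝ)) * ∑ ℓ, φ (A k ℓ) * x ℓ + (1 / (N : ℝ)) * ∑ ℓ, φ (W k ℓ) * s ℓ
        - ((1 / (d : ℝ)) * ∑ ℓ, φ (A k ℓ) * x' ℓ + (1 / (N : ℝ)) * ∑ ℓ, φ (W k ℓ) * s' ℓ)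
        = ((1 / (d : ℝ)) * ∑ ℓ, φ (A k ℓ) * x ℓ - (1 / (d : ℝ)) * ∑ ℓ, φ (A k ℓ) * x' ℓ)
          + ((1 / (N : ℝ)) * ∑ ℓ, φ (W k ℓ) * s ℓ - (1 / (N : ℝ)) * ∑ ℓ, φ (W k ℓ) * s' ℓ) := by
      ring
    rw [e]
    refine le_trans (abs_add_le _ _) (add_le_add ?_ ?_)
    · exact avg_diff_le d hdn _ _ _ _ _ hCφ0' (fun ℓ => hφ _) hxd
    · exact avg_diff_le N hNn _ _ _ _ _ hCφ0' (fun ℓ => hφ _) hsd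
  have hBu : ∀ (xx : Fin d → ℝ) (ta : Fin N → Fin d → Fin N → ℝ)
      (a : Fin N) (b : Fin d) (δ : ℝ), |δ| ≤ 1 → (∀ ℓ, |xx ℓ| ≤ 1) →
      (∀ p q ℓ, |ta p q ℓ| ≤ Cφ' / ((4 - Cφ) * d)) →
      |δ / (d : ℝ) * deriv φ (A a b) * xx b
        + (1 / (N : ℝ)) * ∑ ℓ, φ (W k ℓ) * ta a b ℓ| ≤ Cφ' * Mφ / d := by
    intro xx ta a b δ hδ hxx hta
    refine le_trans (abs_add_le _ _) ?_
    have h1 : |δ / (d : ℝ) * deriv φ (A a b) * xx b| ≤ Cφ' / d * 1 :=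
      delta_term _ _ _ _ _ _ hδ hd0 (le_of_lt hCφ') (hφ' _) zero_le_one (hxx b)
    have h2 : |(1 / (N : ℝ)) * ∑ ℓ, φ (W k ℓ) * ta a b ℓ|
        ≤ Cφ * (Cφ' / ((4 - Cφ) * d)) :=
      avg_abs_le N hNn _ _ _ _ hCφ0' (fun ℓ => hφ _) (fun ℓ => hta a b ℓ)
    have he : Cφ' / d * 1 + Cφ * (Cφ' / ((4 - Cφ) * d)) = Cφ' * Mφ / d := by
      rw [hMφ]; field_simp
    linarith
  have hu_b : |u| ≤ Cφ' * Mφ / d := hBu x tA i j _ hδik hxl htA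
  have hu'_b : |u'| ≤ Cφ' * Mφ / d := hBu x' tA' i j _ hδik hxl' htA'
  have hv_b : |v| ≤ Cφ' * Mφ / d := hBu x tA n m _ hδnk hxl htA
  have hDud : ∀ (a : Fin N) (b : Fin d) (δ : ℝ), |δ| ≤ 1 →
      |(δ / (d : ℝ) * deriv φ (A a b) * x b + (1 / (N : ℝ)) * ∑ ℓ, φ (W k ℓ) * tA a b ℓ)
        - (δ / (d : ℝ) * deriv φ (A a b) * x' b + (1 / (N : ℝ)) * ∑ ℓ, φ (W k ℓ) * tA' a b ℓ)|
        ≤ Cφ' / d * ‖x - x'‖ + Cφ * ‖tA - tA'‖ := by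
    intro a b δ hδ
    have e : (δ / (d : ℝ) * deriv φ (A a b) * x b + (1 / (N : ℝ)) * ∑ ℓ, φ (W k ℓ) * tA a b ℓ)
        - (δ / (d : ℝ) * deriv φ (A a b) * x' b + (1 / (N : ℝ)) * ∑ ℓ, φ (W k ℓ) * tA' a b ℓ)
        = δ / (d : ℝ) * deriv φ (A a b) * (x b - x' b)
          + ((1 / (N : ℝ)) * ∑ ℓ, φ (W k ℓ) * tA a b ℓ
            - (1 / (N : ℝ)) * ∑ ℓ, φ (W k ℓ) * tA' a b ℓ) := by ring
    rw [e]
    refine le_trans (abs_add_le _ _) (add_le_add ?_ ?_)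
    · exact delta_term _ _ _ _ _ _ hδ hd0 (le_of_lt hCφ') (hφ' _) hX0 (hxd b)
    · exact avg_diff_le N hNn _ _ _ _ _ hCφ0' (fun ℓ => hφ _) (fun ℓ => htAd a b ℓ)
  have hud : |u - u'| ≤ Cφ' / d * ‖x - x'‖ + Cφ * ‖tA - tA'‖ := by
    rw [hudef, hu'def]; exact hDud i j _ hδik
  have hvd : |v - v'| ≤ Cφ' / d * ‖x - x'‖ + Cφ * ‖tA - tA'‖ := by
    rw [hvdef, hv'def]; exact hDud n m _ hδnk
  have hw_b : |w| ≤ Cφ'' / d + Cφ * (aAA / (1 - Cφ / 4)) := by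
    rw [hwdef]
    refine le_trans (abs_add_le _ _) (add_le_add ?_ ?_)
    · have := delta_term _ (deriv (deriv φ) (A i j)) (x j) Cφ'' 1 (d : ℝ)
        hδδ hd0 (le_of_lt hCφ'') (hφ'' _) zero_le_one (hxl j)
      simpa using this
    · exact avg_abs_le N hNn _ _ _ _ hCφ0' (fun ℓ => hφ _)
        (fun ℓ => le_trans (htt ℓ) (le_of_eq rfl))
  have hwd : |w - w'| ≤ Cφ'' / d * ‖x - x'‖ + Cφ * ‖tt - tt'‖ := by
    rw [hwdef, hw'def]
    have e : ((if i = k then (1 : ℝ) else 0) * (if (i, j) = (n, m) then (1 : ℝ) else 0) / (d : ℝ)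
        * deriv (deriv φ) (A i j) * x j + (1 / (N : ℝ)) * ∑ ℓ, φ (W k ℓ) * tt ℓ)
        - ((if i = k then (1 : ℝ) else 0) * (if (i, j) = (n, m) then (1 : ℝ) else 0) / (d : ℝ)
        * deriv (deriv φ) (A i j) * x' j + (1 / (N : ℝ)) * ∑ ℓ, φ (W k ℓ) * tt' ℓ)
        = (if i = k then (1 : ℝ) else 0) * (if (i, j) = (n, m) then (1 : ℝ) else 0) / (d : ℝ)
          * deriv (deriv φ) (A i j) * (x j - x' j)
          + ((1 / (N : ℝ)) * ∑ ℓ, φ (W k ℓ) * tt ℓ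
            - (1 / (N : ℝ)) * ∑ ℓ, φ (W k ℓ) * tt' ℓ) := by ring
    rw [e]
    refine le_trans (abs_add_le _ _) (add_le_add ?_ ?_)
    · exact delta_term _ _ _ _ _ _ hδδ hd0 (le_of_lt hCφ'') (hφ'' _) hX0 (hxd j)
    · exact avg_diff_le N hNn _ _ _ _ _ hCφ0' (fun ℓ => hφ _) httd
  -- sigmoid bounds
  have hDz0 : 0 ≤ Cφ * ‖x - x'‖ + Cφ * ‖s - s'‖ := by positivity
  have ha : |deriv (deriv sigmoid) z - deriv (deriv sigmoid) z'|
      ≤ (1/8) * (Cφ * ‖x - x'‖ + Cφ * ‖s - s'‖) := by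
    refine le_trans (deriv2_sigmoid_lip z z') ?_
    have : |z - z'| ≤ Cφ * ‖x - x'‖ + Cφ * ‖s - s'‖ := hzd
    linarith
  have hb : |deriv sigmoid z - deriv sigmoid z'|
      ≤ (1/10) * (Cφ * ‖x - x'‖ + Cφ * ‖s - s'‖) := by
    refine le_trans (deriv_sigmoid_lip z z') ?_
    linarith
  have key := abstract_est (deriv (deriv sigmoid) z) (deriv (deriv sigmoid) z')
    (deriv sigmoid z) (deriv sigmoid z') u u' v v' w w'
    (Cφ' * Mφ / d) (Cφ'' / d + Cφ * (aAA / (1 - Cφ / 4)))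
    (Cφ * ‖x - x'‖ + Cφ * ‖s - s'‖)
    (Cφ' / d * ‖x - x'‖ + Cφ * ‖tA - tA'‖)
    (Cφ' / d * ‖x - x'‖ + Cφ * ‖tA - tA'‖)
    (Cφ'' / d * ‖x - x'‖ + Cφ * ‖tt - tt'‖)
    ha (abs_deriv2_sigmoid_le z') hb (abs_deriv_sigmoid_le z')
    hu_b hu'_b hv_b hud hvd hw_b hwd hDz0
  refine le_trans key (le_of_eq ?_)
  rw [hKx, hKs, haAA, hMφ]
  field_simp
  ring
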